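/- Fix ξ ∈ ℝ, let α = ξ and ν = ξ², and let u be a normalized (α,ξ,ν)-eigenfunction. Then ∫₀^∞ (C_ξ u)(t) u(t) dt = 0. -/

import Mathlib

/-!
When `ν = ξ²` the eigenvalue equation reads `u'' = (t² - 2ξt + 1) u`, and along its solutions
`(C_ξ u) u` is the exact derivative of the quadratic form `G = a u² + b u u' + c u'²`
whose polynomial coefficients, found by solving for them in this ansatz, are
`a = -2/3 - (t² + ξt - 2)(t² - 2ξt + 1)/3`, `b = -(2t + ξ)/3`, `c = (t² + ξt - 2)/3`.
The Robin condition with `α = ξ` gives `u'(0) = 0`, and `a(0) = 0`, so `G(0) = 0`; rapid decay of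
`u` and `u'` gives `G(t) → 0` as `t → ∞`. Hence `∫₀^∞ (C_ξ u) u = G(∞) - G(0) = 0`.
-/

open MeasureTheory

/-- An `(α,ξ,ν)`-eigenfunction: a smooth function on `ℝ` which, together with all its
derivatives, decays faster than any polynomial on `[0,∞)`, solves
`−u'' + ((ξ−t)² + 1)u = νu` on `[0,∞)`, and satisfies the Robin condition
`u'(0) = (α−ξ)u(0)`. -/
def IsEigen (α ξ ν : ℝ) (u : ℝ → ℝ) : Prop :=
  ContDiff ℝ (⊤ : ℕ∞) u ∧
  (∀ n k : ℕ, ∃ C : ℝ, ∀ t : ℝ, 0 ≤ t → |t| ^ k * |iteratedDeriv n u t| ≤ C) ∧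
  (∀ t : ℝ, 0 ≤ t → -(deriv (deriv u) t) + ((ξ - t) ^ 2 + 1) * u t = ν * u t) ∧
  deriv u 0 = (α - ξ) * u 0

/-- The operator `C_ξ w = 2( t·(n₀w) − ξw − w' + t²(ξ−t)w )`, where
`(n₀w)(t) = −w''(t) + ((ξ−t)² + 1)w(t)`. -/
noncomputable def Cxi (ξ : ℝ) (w : ℝ → ℝ) (t : ℝ) : ℝ :=
  2 * (t * (-(deriv (deriv w) t) + ((ξ - t) ^ 2 + 1) * w t)
    - ξ * w t - deriv w t + t ^ 2 * (ξ - t) * w t)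

open Filter Polynomial Set Topology

def IsRapidDecay (v : ℝ → ℝ) : Prop :=
  ∀ k : ℕ, ∃ C, ∀ t : ℝ, 0 ≤ t → t ^ k * |v t| ≤ C

namespace IsRapidDecay

variable {v w : ℝ → ℝ}

lemma exists_abs_le (hv : IsRapidDecay v) : ∃ C, ∀ t : ℝ, 0 ≤ t → |v t| ≤ C := by
  obtain ⟨C, hC⟩ := hv 0
  exact ⟨C, fun t ht => by simpa using hC t ht⟩

lemma add (hv : IsRapidDecay v) (hw : IsRapidDecay w) : IsRapidDecay fun t => v t + w t := by
  intro k
  obtain ⟨C, hC⟩ := hv k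
  obtain ⟨D, hD⟩ := hw k
  refine ⟨C + D, fun t ht => ?_⟩
  calc t ^ k * |v t + w t| ≤ t ^ k * |v t| + t ^ k * |w t| := by
        rw [← mul_add]; exact mul_le_mul_of_nonneg_left (abs_add_le _ _) (by positivity)
    _ ≤ C + D := add_le_add (hC t ht) (hD t ht)

lemma const_mul (hv : IsRapidDecay v) (c : ℝ) : IsRapidDecay fun t => c * v t := by
  intro k
  obtain ⟨C, hC⟩ := hv k
  refine ⟨|c| * C, fun t ht => ?_⟩
  rw [abs_mul, mul_left_comm]
  exact mul_le_mul_of_nonneg_left (hC t ht) (abs_nonneg c)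

lemma pow_mul (hv : IsRapidDecay v) (m : ℕ) : IsRapidDecay fun t => t ^ m * v t := by
  intro k
  obtain ⟨C, hC⟩ := hv (k + m)
  refine ⟨C, fun t ht => ?_⟩
  rw [abs_mul, abs_of_nonneg (pow_nonneg ht m), ← mul_assoc, ← pow_add]
  exact hC t ht

lemma polynomial_eval_mul (hv : IsRapidDecay v) (p : ℝ[X]) :
    IsRapidDecay fun t => p.eval t * v t := by
  induction p using Polynomial.induction_on' with
  | add p q hp hq => simpa only [eval_add, add_mul] using hp.add hq
  | monomial n a => simpa only [eval_monomial, mul_assoc] using (hv.pow_mul n).const_mul a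

lemma mul (hv : IsRapidDecay v) (hw : IsRapidDecay w) : IsRapidDecay fun t => v t * w t := by
  obtain ⟨D, hD⟩ := hw.exists_abs_le
  intro k
  obtain ⟨C, hC⟩ := hv k
  refine ⟨C * D, fun t ht => ?_⟩
  rw [abs_mul, ← mul_assoc]
  exact mul_le_mul (hC t ht) (hD t ht) (abs_nonneg _)
    ((by positivity : (0 : ℝ) ≤ _).trans (hC t ht))

lemma tendsto_atTop_zero (hv : IsRapidDecay v) : Tendsto v atTop (𝓝 0) := by
  obtain ⟨C, hC⟩ := hv 1
  refine squeeze_zero_norm' (a := fun t => C / t) ?_ (tendsto_const_nhds.div_atTop tendsto_id)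
  filter_upwards [eventually_gt_atTop 0] with t ht
  rw [Real.norm_eq_abs, le_div_iff₀ ht, mul_comm]
  simpa using hC t ht.le

lemma integrableOn_Ioi (hv : IsRapidDecay v) (hc : Continuous v) :
    IntegrableOn v (Ioi 0) := by
  obtain ⟨C, hC⟩ := (hv.add (hv.pow_mul 2)).exists_abs_le
  refine Integrable.mono' ((integrable_inv_one_add_sq.const_mul C).integrableOn)
    hc.aestronglyMeasurable ?_
  filter_upwards [ae_restrict_mem measurableSet_Ioi] with t (ht : 0 < t)
  have h : (1 + t ^ 2) * |v t| ≤ C := by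
    simpa only [← one_add_mul, abs_mul, abs_of_nonneg (by positivity : (0 : ℝ) ≤ 1 + t ^ 2)]
      using hC t ht.le
  rw [Real.norm_eq_abs, ← div_eq_mul_inv, le_div_iff₀ (by positivity), mul_comm]
  exact h

end IsRapidDecay

noncomputable def polyQuadForm (p q r : ℝ[X]) (u : ℝ → ℝ) (t : ℝ) : ℝ :=
  p.eval t * u t ^ 2 + q.eval t * (u t * deriv u t) + r.eval t * deriv u t ^ 2

lemma IsRapidDecay.polyQuadForm {u : ℝ → ℝ} (hu : IsRapidDecay u)
    (hu' : IsRapidDecay (deriv u)) (p q r : ℝ[X]) : IsRapidDecay (polyQuadForm p q r u) := by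
  unfold _root_.polyQuadForm
  simp only [sq]
  exact (((hu.mul hu).polynomial_eval_mul p).add ((hu.mul hu').polynomial_eval_mul q)).add
    ((hu'.mul hu').polynomial_eval_mul r)

lemma continuous_polyQuadForm (p q r : ℝ[X]) {u : ℝ → ℝ} (hu : Continuous u)
    (hu' : Continuous (deriv u)) : Continuous (polyQuadForm p q r u) := by
  unfold polyQuadForm
  fun_prop

lemma hasDerivAt_polyQuadForm (p q r : ℝ[X]) {u : ℝ → ℝ} {t : ℝ}
    (hu : DifferentiableAt ℝ u t) (hu' : DifferentiableAt ℝ (deriv u) t) :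
    HasDerivAt (polyQuadForm p q r u)
      (p.derivative.eval t * u t ^ 2 + p.eval t * (2 * u t * deriv u t)
        + q.derivative.eval t * (u t * deriv u t)
        + q.eval t * (deriv u t ^ 2 + u t * deriv (deriv u) t)
        + r.derivative.eval t * deriv u t ^ 2
        + r.eval t * (2 * deriv u t * deriv (deriv u) t)) t := by
  have hU := hu.hasDerivAt
  have hU' := hu'.hasDerivAt
  refine ((((p.hasDerivAt t).mul (hU.pow 2)).add ((q.hasDerivAt t).mul (hU.mul hU'))).add
    ((r.hasDerivAt t).mul (hU'.pow 2))).congr_deriv ?_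
  simp only [Pi.pow_apply, Pi.mul_apply, Nat.cast_ofNat]
  ring

noncomputable def cxiPrimitive (ξ : ℝ) : (ℝ → ℝ) → ℝ → ℝ :=
  polyQuadForm (C (-2 / 3) - C (1 / 3) * (X ^ 2 + C ξ * X - 2) * (X ^ 2 - C (2 * ξ) * X + 1))
    (C (-1 / 3) * (2 * X + C ξ)) (C (1 / 3) * (X ^ 2 + C ξ * X - 2))

lemma cxiPrimitive_zero (ξ : ℝ) {u : ℝ → ℝ} (hu : deriv u 0 = 0) :
    cxiPrimitive ξ u 0 = 0 := by
  simp only [cxiPrimitive, polyQuadForm, hu]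
  norm_num

lemma hasDerivAt_cxiPrimitive {ξ t : ℝ} {u : ℝ → ℝ} (hu : DifferentiableAt ℝ u t)
    (hu' : DifferentiableAt ℝ (deriv u) t)
    (hode : deriv (deriv u) t = (t ^ 2 - 2 * ξ * t + 1) * u t) :
    HasDerivAt (cxiPrimitive ξ u)
      (2 * ((ξ ^ 2 * t - ξ + t ^ 2 * (ξ - t)) * u t - deriv u t) * u t) t := by
  unfold cxiPrimitive
  convert hasDerivAt_polyQuadForm _ _ _ hu hu' using 1
  simp only [hode, derivative_mul, derivative_add, derivative_sub, derivative_C, derivative_X,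
    derivative_X_pow, derivative_ofNat, derivative_one, eval_add, eval_sub, eval_mul, eval_C,
    eval_X, eval_pow, eval_ofNat, eval_one, eval_zero]
  ring

namespace IsEigen

variable {α ξ ν : ℝ} {u : ℝ → ℝ}

lemma isRapidDecay_iteratedDeriv (hu : IsEigen α ξ ν u) (n : ℕ) :
    IsRapidDecay (iteratedDeriv n u) := by
  intro k
  obtain ⟨C, hC⟩ := hu.2.1 n k
  exact ⟨C, fun t ht => by simpa [abs_of_nonneg ht] using hC t ht⟩

lemma deriv_deriv_eq (hu : IsEigen α ξ ν u) {t : ℝ} (ht : 0 ≤ t) :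
    deriv (deriv u) t = ((ξ - t) ^ 2 + 1 - ν) * u t := by
  linarith [hu.2.2.1 t ht]

lemma Cxi_eq (hu : IsEigen α ξ ν u) {t : ℝ} (ht : 0 ≤ t) :
    Cxi ξ u t = 2 * ((ν * t - ξ + t ^ 2 * (ξ - t)) * u t - deriv u t) := by
  rw [Cxi, hu.deriv_deriv_eq ht]
  ring

end IsEigen

theorem Cxi_expectation_zero
    (ξ : ℝ) (u : ℝ → ℝ) (hu : IsEigen ξ ξ (ξ ^ 2) u) :
    ∫ t in Set.Ioi (0 : ℝ), Cxi ξ u t * u t = 0 := by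
  have hsmooth : ContDiff ℝ 2 u := hu.1.of_le (by norm_cast)
  have hdecay := hu.isRapidDecay_iteratedDeriv 0
  have hdecay' := hu.isRapidDecay_iteratedDeriv 1
  rw [iteratedDeriv_zero] at hdecay
  rw [iteratedDeriv_one] at hdecay'
  have hderiv : ∀ t ∈ Ici (0 : ℝ), HasDerivAt (cxiPrimitive ξ u) (Cxi ξ u t * u t) t := by
    intro t ht
    rw [hu.Cxi_eq ht]
    exact hasDerivAt_cxiPrimitive (hsmooth.differentiable (by norm_num) t)
      (hsmooth.differentiable_deriv_two t) (by rw [hu.deriv_deriv_eq ht]; ring)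
  have hintegrand :
      EqOn (polyQuadForm (C 2 * (C (ξ ^ 2) * X - C ξ + X ^ 2 * (C ξ - X))) (C (-2)) 0 u)
      (fun t => Cxi ξ u t * u t) (Ioi 0) := by
    intro t ht
    simp only [polyQuadForm, map_pow, eval_mul, eval_C, eval_add, eval_sub, eval_pow, eval_X,
      map_neg, eval_neg, neg_mul, eval_zero, zero_mul, add_zero, hu.Cxi_eq (le_of_lt ht)]
    ring
  have hint : IntegrableOn (fun t => Cxi ξ u t * u t) (Ioi 0) :=
    ((hdecay.polyQuadForm hdecay' _ _ _).integrableOn_Ioi (continuous_polyQuadForm _ _ _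
      hsmooth.continuous (hsmooth.continuous_deriv (by norm_num)))).congr_fun
      hintegrand measurableSet_Ioi
  have hzero : deriv u 0 = 0 := by rw [hu.2.2.2, sub_self, zero_mul]
  rw [integral_Ioi_of_hasDerivAt_of_tendsto' hderiv hint
    ((hdecay.polyQuadForm hdecay' _ _ _).tendsto_atTop_zero), cxiPrimitive_zero ξ hzero, sub_zero]
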